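/- arXiv:2309.15043 — 2 statements merged into one kernel-verified Lean document; each statement's English description precedes it below -/
import Mathlib

section
/- In an (n,l,r)-alternating sign pentagon, every column with label in {0,...,l-1} ∪ {r+1,...,2n-3} consists entirely of zeros. -/
open Finset

/-- An alternating sign triangle of order `n`: a triangular array with rows `i = 1,…,n`,
row `i` occupying columns `i,…,2n-i` (so the central column is column `n`).
Entries outside this region are `0`. -/
structure AST (n : ℕ) where
  entry : ℕ → ℕ → ℤ
  support : ∀ i j, entry i j ≠ 0 → 1 ≤ i ∧ i ≤ n ∧ i ≤ j ∧ j ≤ 2 * n - i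
  entries : ∀ i j, entry i j = -1 ∨ entry i j = 0 ∨ entry i j = 1
  rowSum : ∀ i, 1 ≤ i → i ≤ n → ∑ j ∈ Icc i (2 * n - i), entry i j = 1
  altRow : ∀ i j₁ j₂, j₁ < j₂ → entry i j₁ ≠ 0 → entry i j₂ ≠ 0 →
      (∀ j, j₁ < j → j < j₂ → entry i j = 0) → entry i j₁ * entry i j₂ = -1
  altCol : ∀ j i₁ i₂, i₁ < i₂ → entry i₁ j ≠ 0 → entry i₂ j ≠ 0 →
      (∀ i, i₁ < i → i < i₂ → entry i j = 0) → entry i₁ j * entry i₂ j = -1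
  topOne : ∀ i j, entry i j ≠ 0 → (∀ i', i' < i → entry i' j = 0) → entry i j = 1

namespace AST

variable {n : ℕ} (T : AST n)

/-- The sum of the entries of column `j`. -/
def colSum (j : ℕ) : ℤ := ∑ i ∈ Icc 1 n, T.entry i j

/-- The bottom entry of column `j` (the entry of column `j` with the largest row index). -/
def bottom (j : ℕ) : ℤ := T.entry (min j (2 * n - j)) j

/-- A `1`-column: a column summing to `1`. -/
def IsOneCol (j : ℕ) : Prop := T.colSum j = 1

/-- An `11`-column: a `1`-column with bottom entry `1`. -/
def IsElevenCol (j : ℕ) : Prop := T.colSum j = 1 ∧ T.bottom j = 1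

/-- A `10`-column: a `1`-column with bottom entry `0`. -/
def IsTenCol (j : ℕ) : Prop := T.colSum j = 1 ∧ T.bottom j = 0

instance : DecidablePred T.IsOneCol := fun j =>
  inferInstanceAs (Decidable (T.colSum j = 1))
instance : DecidablePred T.IsElevenCol := fun j =>
  inferInstanceAs (Decidable (T.colSum j = 1 ∧ T.bottom j = 1))
instance : DecidablePred T.IsTenCol := fun j =>
  inferInstanceAs (Decidable (T.colSum j = 1 ∧ T.bottom j = 0))

/-- The statistic `ρ`: `1` + (number of `11`-columns strictly left of the central column)
+ (number of `10`-columns strictly right of the central column). -/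
def rho : ℕ :=
  1 + ((Icc 1 (n - 1)).filter T.IsElevenCol).card
    + ((Icc (n + 1) (2 * n - 1)).filter T.IsTenCol).card

end AST

/-- The label in `{0,…,2n-3}` of the non-central column with natural index
`j ∈ {1,…,2n-1} \ {n}` of an AST of order `n` (labels go left to right, skipping the
central column). -/
def AST.label (n j : ℕ) : ℕ := if j < n then j - 1 else j - 2

namespace AST

variable {n : ℕ} (T : AST n)

/-- `T` is an `(n,l,r)`-alternating sign pentagon: every non-central `1`-column has its
label between `l` and `r`. -/
def IsASP (l r : ℕ) : Prop :=
  ∀ j, 1 ≤ j → j ≤ 2 * n - 1 → j ≠ n → T.IsOneCol j → l ≤ AST.label n j ∧ AST.label n j ≤ r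

end AST


private lemma alt_sum_suffix (f : ℕ → ℤ)
    (hval : ∀ k, f k = -1 ∨ f k = 0 ∨ f k = 1)
    (halt : ∀ k₁ k₂, k₁ < k₂ → f k₁ ≠ 0 → f k₂ ≠ 0 →
      (∀ k, k₁ < k → k < k₂ → f k = 0) → f k₁ * f k₂ = -1)
    (b : ℕ) : ∀ a,
    (∀ k, a ≤ k → k ≤ b → f k = 0) ∨
      ∃ k0, a ≤ k0 ∧ k0 ≤ b ∧ f k0 ≠ 0 ∧ (∀ k, a ≤ k → k < k0 → f k = 0) ∧
        (∑ k ∈ Icc a b, f k = 0 ∨ ∑ k ∈ Icc a b, f k = f k0) := by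
  have key : ∀ d a, b + 1 ≤ a + d →
      (∀ k, a ≤ k → k ≤ b → f k = 0) ∨
      ∃ k0, a ≤ k0 ∧ k0 ≤ b ∧ f k0 ≠ 0 ∧ (∀ k, a ≤ k → k < k0 → f k = 0) ∧
        (∑ k ∈ Icc a b, f k = 0 ∨ ∑ k ∈ Icc a b, f k = f k0) := by
    intro d
    induction d with
    | zero => intro a ha; left; intro k hk1 hk2; omega
    | succ d ih =>
      intro a ha
      rcases Nat.lt_or_ge b a with hba | hab
      · left; intro k hk1 hk2; omega
      have hsplit : ∑ k ∈ Icc a b, f k = f a + ∑ k ∈ Icc (a + 1) b, f k := by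
        rw [← Finset.sum_Ioc_add_eq_sum_Icc hab]
        rw [add_comm]
        congr 1
        rw [← Finset.Icc_add_one_left_eq_Ioc]
      rcases ih (a + 1) (by omega) with hz | ⟨k1, hk1a, hk1b, hk1n, hk1z, hk1s⟩
      · -- everything above a+1 is zero
        have hsz : ∑ k ∈ Icc (a + 1) b, f k = 0 :=
          Finset.sum_eq_zero fun k hk => hz k (mem_Icc.mp hk).1 (mem_Icc.mp hk).2
        by_cases hfa : f a = 0
        · left; intro k hk1 hk2
          rcases Nat.eq_or_lt_of_le hk1 with rfl | h
          · exact hfa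
          · exact hz k h hk2
        · right
          exact ⟨a, le_refl a, hab, hfa, fun k h1 h2 => by omega,
            Or.inr (by rw [hsplit, hsz, add_zero])⟩
      · by_cases hfa : f a = 0
        · right
          refine ⟨k1, by omega, hk1b, hk1n, ?_, ?_⟩
          · intro k h1 h2
            rcases Nat.eq_or_lt_of_le h1 with rfl | h
            · exact hfa
            · exact hk1z k h h2
          · rw [hsplit, hfa, zero_add]; exact hk1s
        · right
          refine ⟨a, le_refl a, hab, hfa, fun k h1 h2 => by omega, ?_⟩
          have hprod : f a * f k1 = -1 := by
            apply halt a k1 (by omega) hfa hk1n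
            intro k h1 h2; exact hk1z k (by omega) h2
          have hk1v : f k1 = -f a := by
            rcases hval a with h | h | h
            · rw [h] at hprod ⊢; linarith
            · exact absurd h hfa
            · rw [h] at hprod ⊢; linarith
          rw [hsplit]
          rcases hk1s with hs | hs
          · right; rw [hs, add_zero]
          · left; rw [hs, hk1v]; ring
  intro a; exact key (b + 1 - a) a (by omega)

private lemma alt_sum_prefix (f : ℕ → ℤ)
    (hval : ∀ k, f k = -1 ∨ f k = 0 ∨ f k = 1)
    (halt : ∀ k₁ k₂, k₁ < k₂ → f k₁ ≠ 0 → f k₂ ≠ 0 →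
      (∀ k, k₁ < k → k < k₂ → f k = 0) → f k₁ * f k₂ = -1)
    (a : ℕ) : ∀ b,
    (∀ k, a ≤ k → k ≤ b → f k = 0) ∨
      ∃ k0, a ≤ k0 ∧ k0 ≤ b ∧ f k0 ≠ 0 ∧ (∀ k, k0 < k → k ≤ b → f k = 0) ∧
        (∑ k ∈ Icc a b, f k = 0 ∨ ∑ k ∈ Icc a b, f k = f k0) := by
  intro b
  induction b with
  | zero =>
    rcases Nat.lt_or_ge 0 a with h | h
    · left; intro k hk1 hk2; omega
    · have ha0 : a = 0 := by omega
      subst ha0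
      by_cases hf : f 0 = 0
      · left; intro k h1 h2
        have : k = 0 := by omega
        rw [this]; exact hf
      · right
        exact ⟨0, le_refl 0, le_refl 0, hf, fun k h1 h2 => by omega,
          Or.inr (by simp)⟩
  | succ b ih =>
    rcases Nat.lt_or_ge (b + 1) a with hba | hab
    · left; intro k hk1 hk2; omega
    have hsplit : ∑ k ∈ Icc a (b + 1), f k = (∑ k ∈ Icc a b, f k) + f (b + 1) :=
      Finset.sum_Icc_succ_top hab _
    by_cases hfb : f (b + 1) = 0
    · rcases ih with hz | ⟨k1, hk1a, hk1b, hk1n, hk1z, hk1s⟩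
      · left; intro k h1 h2
        rcases Nat.lt_or_ge k (b + 1) with h | h
        · exact hz k h1 (by omega)
        · have : k = b + 1 := by omega
          rw [this]; exact hfb
      · right
        refine ⟨k1, hk1a, by omega, hk1n, ?_, ?_⟩
        · intro k h1 h2
          rcases Nat.lt_or_ge k (b + 1) with h | h
          · exact hk1z k h1 (by omega)
          · have : k = b + 1 := by omega
            rw [this]; exact hfb
        · rw [hsplit, hfb, add_zero]; exact hk1s
    · right
      refine ⟨b + 1, ?_, le_refl _, hfb, fun k h1 h2 => by omega, ?_⟩
      · rcases ih with hz | ⟨k1, hk1a, _, _, _, _⟩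
        · exact hab
        · omega
      rcases ih with hz | ⟨k1, hk1a, hk1b, hk1n, hk1z, hk1s⟩
      · have hsz : ∑ k ∈ Icc a b, f k = 0 :=
          Finset.sum_eq_zero fun k hk => hz k (mem_Icc.mp hk).1 (mem_Icc.mp hk).2
        right; rw [hsplit, hsz, zero_add]
      · have hprod : f k1 * f (b + 1) = -1 := by
          apply halt k1 (b + 1) (by omega) hk1n hfb
          intro k h1 h2; exact hk1z k h1 (by omega)
        have hk1v : f k1 = -f (b + 1) := by
          rcases hval (b + 1) with h | h | h
          · rw [h] at hprod ⊢; linarith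
          · exact absurd h hfb
          · rw [h] at hprod ⊢; linarith
        rw [hsplit]
        rcases hk1s with hs | hs
        · right; rw [hs, zero_add]
        · left; rw [hs, hk1v]; ring

private lemma AST.colSum_zero_or_one {n : ℕ} (T : AST n) (j : ℕ) :
    T.colSum j = 0 ∨ T.colSum j = 1 := by
  rcases alt_sum_suffix (fun i => T.entry i j) (fun i => T.entries i j)
      (fun i₁ i₂ h h1 h2 hz => T.altCol j i₁ i₂ h h1 h2 hz) n 1 with
    hz | ⟨i0, hi0a, hi0b, hi0n, hi0z, hi0s⟩
  · left
    exact Finset.sum_eq_zero fun i hi => hz i (mem_Icc.mp hi).1 (mem_Icc.mp hi).2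
  · have htop : T.entry i0 j = 1 := by
      apply T.topOne i0 j hi0n
      intro i' hi'
      rcases Nat.eq_zero_or_pos i' with h | h
      · subst h
        by_contra hne
        have := T.support 0 j hne
        omega
      · exact hi0z i' h hi'
    rcases hi0s with h | h
    · left; exact h
    · right; exact h.trans htop

private lemma left_cols_zero {n l r : ℕ} (hl : l + 2 ≤ n)
    (T : AST n) (hT : T.IsASP l r) :
    ∀ j, j ≤ l → ∀ i, T.entry i j = 0 := by
  intro j
  induction j using Nat.strong_induction_on with
  | _ j ih =>
  intro hjl
  by_cases hj0 : j = 0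
  · subst hj0
    intro i
    by_contra hne
    have := T.support i 0 hne
    omega
  have h1 : ∀ i, T.entry i j ≠ 0 → T.entry i j = 1 := by
    intro i hne
    obtain ⟨hi1, hin, hij, hjb⟩ := T.support i j hne
    have hrow : ∑ k ∈ Icc i (2 * n - i), T.entry i k = 1 := T.rowSum i hi1 hin
    have hsum : ∑ k ∈ Icc j (2 * n - i), T.entry i k = 1 := by
      rw [← hrow]
      apply Finset.sum_subset (Finset.Icc_subset_Icc_left hij)
      intro k hk hk'
      simp only [mem_Icc] at hk hk'
      exact ih k (by omega) (by omega) i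
    rcases alt_sum_suffix (fun k => T.entry i k) (T.entries i)
        (fun k₁ k₂ h h1 h2 hz => T.altRow i k₁ k₂ h h1 h2 hz) (2 * n - i) j with
      hz | ⟨k0, hk0a, hk0b, hk0n, hk0z, hk0s⟩
    · exact absurd (hz j le_rfl hjb) hne
    · have hk0j : k0 = j := by
        by_contra hne'
        exact hne (hk0z j le_rfl (by omega))
      subst hk0j
      rcases hk0s with h | h <;> rw [hsum] at h <;> omega
  have hcol : T.colSum j = 0 := by
    rcases AST.colSum_zero_or_one T j with h | h
    · exact h
    exfalso
    have hlab : AST.label n j = j - 1 := if_pos (by omega)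
    have := hT j (by omega) (by omega) (by omega) h
    omega
  intro i
  by_cases hmem : 1 ≤ i ∧ i ≤ n
  · have hnn : ∀ k ∈ Icc 1 n, 0 ≤ T.entry k j := by
      intro k _
      by_cases hz : T.entry k j = 0
      · rw [hz]
      · rw [h1 k hz]; norm_num
    exact (Finset.sum_eq_zero_iff_of_nonneg hnn).mp hcol i (mem_Icc.mpr hmem)
  · by_contra hne
    have := T.support i j hne
    omega

private lemma right_cols_zero {n l r : ℕ} (hl : l + 2 ≤ n) (hr1 : n < r + 2)
    (T : AST n) (hT : T.IsASP l r) :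
    ∀ m j, r + 3 ≤ j → 2 * n ≤ j + m → ∀ i, T.entry i j = 0 := by
  intro m
  induction m with
  | zero =>
    intro j hj1 hj2 i
    by_contra hne
    obtain ⟨_, _, _, h4⟩ := T.support i j hne
    omega
  | succ m ih =>
    intro j hjr hjm
    rcases Nat.lt_or_ge j (2 * n) with hj2n | hj2n
    swap
    · intro i
      by_contra hne
      obtain ⟨_, _, _, h4⟩ := T.support i j hne
      omega
    have h1 : ∀ i, T.entry i j ≠ 0 → T.entry i j = 1 := by
      intro i hne
      obtain ⟨hi1, hin, hij, hjb⟩ := T.support i j hne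
      have hrow : ∑ k ∈ Icc i (2 * n - i), T.entry i k = 1 := T.rowSum i hi1 hin
      have hsum : ∑ k ∈ Icc i j, T.entry i k = 1 := by
        rw [← hrow]
        apply Finset.sum_subset (Finset.Icc_subset_Icc_right hjb)
        intro k hk hk'
        simp only [mem_Icc] at hk hk'
        exact ih k (by omega) (by omega) i
      rcases alt_sum_prefix (fun k => T.entry i k) (T.entries i)
          (fun k₁ k₂ h h1 h2 hz => T.altRow i k₁ k₂ h h1 h2 hz) i j with
        hz | ⟨k0, hk0a, hk0b, hk0n, hk0z, hk0s⟩
      · exact absurd (hz j hij le_rfl) hne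
      · have hk0j : k0 = j := by
          by_contra hne'
          exact hne (hk0z j (by omega) le_rfl)
        subst hk0j
        rcases hk0s with h | h <;> rw [hsum] at h <;> omega
    have hcol : T.colSum j = 0 := by
      rcases AST.colSum_zero_or_one T j with h | h
      · exact h
      exfalso
      have hlab : AST.label n j = j - 2 := if_neg (by omega)
      have := hT j (by omega) (by omega) (by omega) h
      omega
    intro i
    by_cases hmem : 1 ≤ i ∧ i ≤ n
    · have hnn : ∀ k ∈ Icc 1 n, 0 ≤ T.entry k j := by
        intro k _
        by_cases hz : T.entry k j = 0
        · rw [hz]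
        · rw [h1 k hz]; norm_num
      exact (Finset.sum_eq_zero_iff_of_nonneg hnn).mp hcol i (mem_Icc.mpr hmem)
    · by_contra hne
      have := T.support i j hne
      omega

/-- In an `(n,l,r)`-alternating sign pentagon, every non-central column whose
label lies in `{0,…,l-1} ∪ {r+1,…,2n-3}` consists entirely of zeros. -/
theorem ASP_outer_columns_zero (n l r : ℕ) (hl : l + 2 ≤ n) (hr1 : n < r + 2)
    (hr2 : r + 3 ≤ 2 * n) (T : AST n) (hT : T.IsASP l r) :
    ∀ j, 1 ≤ j → j ≤ 2 * n - 1 → j ≠ n →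
      (AST.label n j < l ∨ r < AST.label n j) → ∀ i, T.entry i j = 0 := by
  intro j hj1 hj2 hjn hlab i
  rcases Nat.lt_or_ge j n with hjlt | hjge
  · have hl' : AST.label n j = j - 1 := if_pos hjlt
    rcases hlab with h | h
    · exact left_cols_zero hl T hT j (by omega) i
    · omega
  · have hl' : AST.label n j = j - 2 := if_neg (by omega)
    rcases hlab with h | h
    · omega
    · exact right_cols_zero hl hr1 T hT (2 * n) j (by omega) (by omega) i
end

section
/- For n ∈ ℕ, 1 ≤ p ≤ n, and 0 ≤ l ≤ n-2 < r ≤ 2n-3 with l + r < 2n-2, the map reflecting an AST along its central column is a bijection between (n,l,r)-alternating sign pentagons P with ρ(P) = p and (n, 2n-3-r, 2n-3-l)-alternating sign pentagons T with ρ(T) = n+1-p. -/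
open Finset

/-!
Reflection `T ↦ T̄` along the central column is an involution of the ASTs of order `n`; it sends
column `j` to column `2n - j`, hence the column with label `λ` to the one with label `2n - 3 - λ`,
so it exchanges `(n,l,r)`- and `(n,2n-3-r,2n-3-l)`-pentagons.

For `ρ`: the partial sums down a column are `0` or `1`, and a nonzero entry is twice its partial
sum minus one. Hence the bottom entry of a `1`-column is `0` or `1`, the central column is a
`1`-column, and, as all entries sum to `n`, there are `n - 1` non-central `1`-columns. Reflection
swaps left and right and preserves the type of each column, so each non-central `1`-column is
counted in exactly one of `ρ(T)`, `ρ(T̄)`, whence `ρ(T) + ρ(T̄) = n + 1`; as both are positive,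
`ρ(T) = p` iff `ρ(T̄) = n + 1 - p`.
-/

lemma Finset.sum_Icc_one_two_mul_sub_one {M : Type*} [AddCommMonoid M] (f : ℕ → M) {n : ℕ}
    (hn : 1 ≤ n) :
    ∑ j ∈ Icc 1 (2 * n - 1), f j
      = ∑ j ∈ Icc 1 (n - 1), f j + f n + ∑ j ∈ Icc (n + 1) (2 * n - 1), f j := by
  obtain ⟨m, rfl⟩ : ∃ m, n = m + 1 := ⟨n - 1, by omega⟩
  have hIcc : ∀ b, Icc 1 b = Ioc 0 b := Icc_add_one_left_eq_Ioc 0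
  rw [hIcc, hIcc, Icc_add_one_left_eq_Ioc, add_tsub_cancel_right]
  rw [← sum_Ioc_succ_top (Nat.zero_le m), sum_Ioc_consecutive f (Nat.zero_le _) (by omega)]

lemma Finset.card_filter_Icc_comp_sub (p : ℕ → Prop) [DecidablePred p] {a b N : ℕ}
    (ha : a ≤ N) (hb : b ≤ N) :
    #((Icc a b).filter fun j => p (N - j)) = #((Icc (N - b) (N - a)).filter p) := by
  apply card_nbij' (N - ·) (N - ·) <;> intro j hj <;>
    simp only [coe_filter, Set.mem_ofPred_eq, mem_Icc] at hj ⊢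
  · exact ⟨by omega, hj.2⟩
  · exact ⟨by omega, by rw [Nat.sub_sub_self (by omega)]; exact hj.2⟩
  · omega
  · omega

namespace AST

variable {n : ℕ}

theorem ext {T S : AST n} (h : ∀ i j, T.entry i j = S.entry i j) : T = S := by
  obtain ⟨e, _⟩ := T
  obtain ⟨e', _⟩ := S
  obtain rfl : e = e' := funext₂ h
  rfl

section Columns

variable (T : AST n)

lemma entry_eq_zero {i j : ℕ} (h : ¬(1 ≤ i ∧ i ≤ n ∧ i ≤ j ∧ j ≤ 2 * n - i)) :
    T.entry i j = 0 :=
  not_imp_comm.mp (T.support i j) h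

def colPartialSum (j m : ℕ) : ℤ := ∑ i ∈ Icc 1 m, T.entry i j

lemma colPartialSum_succ (j m : ℕ) :
    T.colPartialSum j (m + 1) = T.colPartialSum j m + T.entry (m + 1) j :=
  sum_Icc_succ_top (by omega) _

lemma colPartialSum_invariant (j m : ℕ) :
    (T.colPartialSum j m = 0 ∨ T.colPartialSum j m = 1) ∧
      ∀ i, m < i → T.entry i j ≠ 0 → (∀ k, m < k → k < i → T.entry k j = 0) →
        T.entry i j = 1 - 2 * T.colPartialSum j m := by
  induction m with
  | zero =>
    refine ⟨Or.inl (by simp [colPartialSum]), fun i _ hi hbetween => ?_⟩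
    have hfirst := T.topOne i j hi fun k hk => by
      rcases k with _ | k
      · exact T.entry_eq_zero (by omega)
      · exact hbetween (k + 1) (by omega) hk
    simp [hfirst, colPartialSum]
  | succ m ih =>
    obtain ⟨hsum, hnext⟩ := ih
    rw [colPartialSum_succ]
    by_cases hm : T.entry (m + 1) j = 0
    · refine ⟨by rwa [hm, add_zero], fun i hi hne hbetween => ?_⟩
      rw [hm, add_zero]
      refine hnext i (by omega) hne fun k hk hki => ?_
      rcases (show k = m + 1 ∨ m + 1 < k by omega) with rfl | hk'
      · exact hm
      · exact hbetween k hk' hki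
    · have hcur := hnext (m + 1) (by omega) hm fun k _ _ => by omega
      refine ⟨by omega, fun i hi hne hbetween => ?_⟩
      have halt := T.altCol j (m + 1) i hi hm hne hbetween
      rcases T.entries i j with h | h | h <;> rw [h] at halt ⊢ <;> linarith

lemma entry_eq_two_mul_colPartialSum_sub_one {i j : ℕ} (h : T.entry i j ≠ 0) :
    T.entry i j = 2 * T.colPartialSum j i - 1 := by
  rcases i with _ | m
  · exact absurd (T.entry_eq_zero (by omega)) h
  · have := (T.colPartialSum_invariant j m).2 (m + 1) (by omega) h fun k _ _ => by omega
    rw [colPartialSum_succ]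
    linarith

lemma colSum_eq_zero_or_one (j : ℕ) : T.colSum j = 0 ∨ T.colSum j = 1 :=
  (T.colPartialSum_invariant j n).1

lemma colSum_eq_colPartialSum_min (j : ℕ) :
    T.colSum j = T.colPartialSum j (min j (2 * n - j)) := by
  refine (sum_subset (Icc_subset_Icc le_rfl (by omega)) fun i hi hi' => ?_).symm
  simp only [mem_Icc] at hi hi'
  exact T.entry_eq_zero (by omega)

lemma bottom_eq_zero_or_one_of_isOneCol {j : ℕ} (h : T.IsOneCol j) :
    T.bottom j = 0 ∨ T.bottom j = 1 := by
  by_cases hb : T.bottom j = 0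
  · exact Or.inl hb
  · right
    rw [bottom, T.entry_eq_two_mul_colPartialSum_sub_one hb, ← colSum_eq_colPartialSum_min,
      show T.colSum j = 1 from h]
    norm_num

lemma isOneCol_iff (j : ℕ) : T.IsOneCol j ↔ T.IsElevenCol j ∨ T.IsTenCol j := by
  refine ⟨fun h => ?_, by rintro (⟨h, _⟩ | ⟨h, _⟩) <;> exact h⟩
  rcases T.bottom_eq_zero_or_one_of_isOneCol h with hb | hb
  · exact Or.inr ⟨h, hb⟩
  · exact Or.inl ⟨h, hb⟩

lemma card_filter_isOneCol (s : Finset ℕ) :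
    #(s.filter T.IsOneCol) = #(s.filter T.IsElevenCol) + #(s.filter T.IsTenCol) := by
  rw [filter_congr fun j _ => T.isOneCol_iff j, filter_or, card_union_of_disjoint]
  rw [disjoint_filter]
  rintro j _ ⟨_, h1⟩ ⟨_, h0⟩
  rw [h1] at h0
  exact one_ne_zero h0

lemma isOneCol_center (hn : 1 ≤ n) : T.IsOneCol n := by
  have hnn : T.entry n n = 1 := by
    simpa [show 2 * n - n = n by omega] using T.rowSum n hn le_rfl
  have := T.entry_eq_two_mul_colPartialSum_sub_one (hnn ▸ one_ne_zero)
  show T.colPartialSum n n = 1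
  linarith

lemma sum_colSum (hn : 1 ≤ n) : ∑ j ∈ Icc 1 (2 * n - 1), T.colSum j = n := by
  have hrow : ∀ i ∈ Icc 1 n, ∑ j ∈ Icc 1 (2 * n - 1), T.entry i j = 1 := by
    intro i hi
    rw [mem_Icc] at hi
    rw [← T.rowSum i hi.1 hi.2]
    refine (sum_subset (Icc_subset_Icc (by omega) (by omega)) fun j hj hj' => ?_).symm
    simp only [mem_Icc] at hj hj'
    exact T.entry_eq_zero (by omega)
  simp only [colSum]
  rw [sum_comm, sum_congr rfl hrow]
  simp

lemma card_filter_isOneCol_noncentral (hn : 1 ≤ n) :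
    #((Icc 1 (n - 1)).filter T.IsOneCol) + #((Icc (n + 1) (2 * n - 1)).filter T.IsOneCol)
      = n - 1 := by
  have hcount : ∀ s : Finset ℕ, (#(s.filter T.IsOneCol) : ℤ) = ∑ j ∈ s, T.colSum j := by
    intro s
    rw [natCast_card_filter]
    refine sum_congr rfl fun j _ => ?_
    rcases T.colSum_eq_zero_or_one j with h | h <;> simp [IsOneCol, h]
  have htotal := T.sum_colSum hn
  rw [sum_Icc_one_two_mul_sub_one _ hn, ← hcount, ← hcount,
    show T.colSum n = 1 from T.isOneCol_center hn] at htotal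
  omega

lemma one_le_rho : 1 ≤ T.rho := by
  unfold rho
  omega

end Columns

def reflect (T : AST n) : AST n where
  entry i j := T.entry i (2 * n - j)
  support i j h := by
    have := T.support _ _ h
    omega
  entries i j := T.entries i _
  rowSum i hi1 hi2 := by
    rw [← T.rowSum i hi1 hi2]
    refine sum_nbij' (2 * n - ·) (2 * n - ·) ?_ ?_ ?_ ?_ ?_ <;>
      intro a ha <;> simp only [mem_Icc] at * <;> omega
  altRow i j₁ j₂ hlt h₁ h₂ hbetween := by
    have hs₁ := T.support _ _ h₁
    have hs₂ := T.support _ _ h₂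
    rw [mul_comm]
    refine T.altRow i _ _ (by omega) h₂ h₁ fun j hj₁ hj₂ => ?_
    simpa [Nat.sub_sub_self (show j ≤ 2 * n by omega)] using
      hbetween (2 * n - j) (by omega) (by omega)
  altCol j := T.altCol (2 * n - j)
  topOne i j := T.topOne i (2 * n - j)

@[simp] lemma reflect_entry (T : AST n) (i j : ℕ) :
    T.reflect.entry i j = T.entry i (2 * n - j) := rfl

lemma reflect_involutive : Function.Involutive (reflect (n := n)) := by
  intro T
  refine ext fun i j => ?_
  by_cases hj : j ≤ 2 * n
  · simp [Nat.sub_sub_self hj]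
  · rw [reflect_entry, reflect_entry, T.entry_eq_zero (by omega), T.entry_eq_zero (by omega)]

section Reflection

variable (T : AST n)

lemma reflect_colSum (j : ℕ) : T.reflect.colSum j = T.colSum (2 * n - j) := rfl

lemma reflect_bottom (j : ℕ) : T.reflect.bottom j = T.bottom (2 * n - j) := by
  simp only [bottom, reflect_entry]
  congr 1
  omega

lemma reflect_isElevenCol (j : ℕ) : T.reflect.IsElevenCol j ↔ T.IsElevenCol (2 * n - j) := by
  rw [IsElevenCol, IsElevenCol, reflect_colSum, reflect_bottom]

lemma reflect_isTenCol (j : ℕ) : T.reflect.IsTenCol j ↔ T.IsTenCol (2 * n - j) := by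
  rw [IsTenCol, IsTenCol, reflect_colSum, reflect_bottom]

lemma rho_add_rho_reflect (hn : 1 ≤ n) : T.rho + T.reflect.rho = n + 1 := by
  have hleft : #((Icc 1 (n - 1)).filter T.reflect.IsElevenCol)
      = #((Icc (n + 1) (2 * n - 1)).filter T.IsElevenCol) := by
    rw [filter_congr fun j _ => T.reflect_isElevenCol j,
      card_filter_Icc_comp_sub _ (by omega) (by omega)]
    congr 3
    omega
  have hright : #((Icc (n + 1) (2 * n - 1)).filter T.reflect.IsTenCol)
      = #((Icc 1 (n - 1)).filter T.IsTenCol) := by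
    rw [filter_congr fun j _ => T.reflect_isTenCol j,
      card_filter_Icc_comp_sub _ (by omega) (by omega)]
    congr 3 <;> omega
  have := T.card_filter_isOneCol (Icc 1 (n - 1))
  have := T.card_filter_isOneCol (Icc (n + 1) (2 * n - 1))
  have := T.card_filter_isOneCol_noncentral hn
  simp only [rho, hleft, hright]
  omega

lemma label_two_mul_sub {j : ℕ} (hj₁ : 1 ≤ j) (hjn : j ≠ n) :
    label n (2 * n - j) = 2 * n - 3 - label n j := by
  unfold label
  split_ifs <;> omega

lemma IsASP.reflect {l r : ℕ} (hT : T.IsASP l r) :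
    T.reflect.IsASP (2 * n - 3 - r) (2 * n - 3 - l) := by
  intro j hj₁ hj₂ hjn hone
  have := hT (2 * n - j) (by omega) (by omega) (by omega) hone
  have hlabel : label n j ≤ 2 * n - 3 := by
    unfold label
    split_ifs <;> omega
  rw [label_two_mul_sub hj₁ hjn] at this
  omega

lemma isASP_reflect_iff {l r : ℕ} (hl : l ≤ 2 * n - 3) (hr : r ≤ 2 * n - 3) :
    T.reflect.IsASP (2 * n - 3 - r) (2 * n - 3 - l) ↔ T.IsASP l r := by
  refine ⟨fun h => ?_, IsASP.reflect T⟩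
  have := IsASP.reflect _ h
  rwa [reflect_involutive, Nat.sub_sub_self hr, Nat.sub_sub_self hl] at this

end Reflection

end AST

theorem reflection_bijection_ASP_general (n l r p : ℕ)
    (hl : l + 2 ≤ n) (hr2 : r + 3 ≤ 2 * n) :
    ∃ e : {P : AST n // P.IsASP l r ∧ P.rho = p} ≃
          {T : AST n // T.IsASP (2 * n - 3 - r) (2 * n - 3 - l) ∧ T.rho = n + 1 - p},
      ∀ (P : {P : AST n // P.IsASP l r ∧ P.rho = p}) (i j : ℕ),
        (e P).1.entry i j = P.1.entry i (2 * n - j) := by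
  refine ⟨Equiv.subtypeEquiv AST.reflect_involutive.toPerm fun P => ?_, fun _ _ _ => rfl⟩
  have hsum := P.rho_add_rho_reflect (by omega)
  have := P.reflect.one_le_rho
  rw [Function.Involutive.coe_toPerm, P.isASP_reflect_iff (by omega) (by omega)]
  exact and_congr_right fun _ => by omega

/-- For `1 ≤ p ≤ n`, `0 ≤ l ≤ n-2 < r ≤ 2n-3` with `l + r < 2n - 2`,
reflection along the central column is a bijection between `(n,l,r)`-ASPs `P` with `ρ(P) = p`
and `(n, 2n-3-r, 2n-3-l)`-ASPs `T` with `ρ(T) = n + 1 - p`. -/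
theorem reflection_bijection_ASP (n l r p : ℕ) (hp1 : 1 ≤ p) (hpn : p ≤ n)
    (hl : l + 2 ≤ n) (hr1 : n < r + 2) (hr2 : r + 3 ≤ 2 * n) (hlr : l + r + 2 < 2 * n) :
    ∃ e : {P : AST n // P.IsASP l r ∧ P.rho = p} ≃
          {T : AST n // T.IsASP (2 * n - 3 - r) (2 * n - 3 - l) ∧ T.rho = n + 1 - p},
      ∀ (P : {P : AST n // P.IsASP l r ∧ P.rho = p}) (i j : ℕ),
        (e P).1.entry i j = P.1.entry i (2 * n - j) :=
  reflection_bijection_ASP_general n l r p hl hr2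
end
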